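/- Let G, F be graphs with all loops, A(G), B(F) partial positive definite matrices each admitting unique maximum-determinant positive definite completions Â and B̂, and let t ∈ (0,1). Then Â #_t B̂ is the unique maximizer of det(M #_t N) over M ∈ p⁺[A(G)], N ∈ p⁺[B(F)], i.e., det(M #_t N) ≤ det(Â #_t B̂) with equality iff M = Â and N = B̂. -/

import Mathlib

open Matrix
open scoped ComplexOrder

/-- Real power of a Hermitian matrix via its spectral decomposition
(junk value for non-Hermitian input). -/
noncomputable def mrpow {m : ℕ} (A : Matrix (Fin m) (Fin m) ℂ) (t : ℝ) : Matrix (Fin m) (Fin m) ℂ :=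
  if h : A.IsHermitian then
    (h.eigenvectorUnitary : Matrix (Fin m) (Fin m) ℂ) *
      Matrix.diagonal (fun i => ((h.eigenvalues i ^ t : ℝ) : ℂ)) *
      star (h.eigenvectorUnitary : Matrix (Fin m) (Fin m) ℂ)
  else A

/-- Weighted geometric mean  A #_t B = A^{1/2} (A^{-1/2} B A^{-1/2})^t A^{1/2}. -/
noncomputable def geomMean {m : ℕ} (t : ℝ) (A B : Matrix (Fin m) (Fin m) ℂ) :
    Matrix (Fin m) (Fin m) ℂ :=
  mrpow A (1/2) * mrpow (mrpow A (-(1/2)) * B * mrpow A (-(1/2))) t * mrpow A (1/2)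

/-- `M` is a completion of a partial matrix `A` with entries specified on edges `E`. -/
def IsCompletion {n : ℕ} (E : Fin n → Fin n → Prop) (A M : Matrix (Fin n) (Fin n) ℂ) : Prop :=
  ∀ i j, E i j → M i j = A i j

/-- The set of positive definite completions of the partial matrix `A`. -/
def pdCompletions {n : ℕ} (E : Fin n → Fin n → Prop) (A : Matrix (Fin n) (Fin n) ℂ) :
    Set (Matrix (Fin n) (Fin n) ℂ) :=
  {M | M.PosDef ∧ IsCompletion E A M}

/-- A partial matrix is partial positive definite if every fully specified
principal submatrix (indexed by a clique) is positive definite. -/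
def PartialPD {n : ℕ} (E : Fin n → Fin n → Prop) (A : Matrix (Fin n) (Fin n) ℂ) : Prop :=
  ∀ C : Finset (Fin n), (∀ i ∈ C, ∀ j ∈ C, E i j) →
    Matrix.PosDef (A.submatrix (fun x : {i // i ∈ C} => (x : Fin n))
      (fun x : {i // i ∈ C} => (x : Fin n)))

/-
The determinant of a weighted geometric mean is the weighted geometric mean of the determinants,
det (M #_t N) = (det M)^(1-t) (det N)^t, and for 0 < t < 1 the right-hand side is strictly
increasing in each of det M and det N. Hence it is maximal exactly when both determinants are
maximal, which by uniqueness of the maximum-determinant completions forces M = Â and N = B̂.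
-/

lemma mrpow_isHermitian {m : ℕ} {A : Matrix (Fin m) (Fin m) ℂ} (hA : A.IsHermitian) (s : ℝ) :
    (mrpow A s).IsHermitian := by
  have hD : (diagonal fun i => ((hA.eigenvalues i ^ s : ℝ) : ℂ)).IsHermitian :=
    isHermitian_diagonal_of_self_adjoint _ (by ext i; simp)
  rw [mrpow, dif_pos hA, star_eq_conjTranspose]
  exact isHermitian_mul_mul_conjTranspose _ hD

lemma det_mrpow {m : ℕ} {A : Matrix (Fin m) (Fin m) ℂ} (hA : A.PosSemidef) (s : ℝ) :
    (mrpow A s).det = ((A.det.re ^ s : ℝ) : ℂ) := by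
  have h := hA.isHermitian
  have hU : (h.eigenvectorUnitary : Matrix (Fin m) (Fin m) ℂ).det *
      (star (h.eigenvectorUnitary : Matrix (Fin m) (Fin m) ℂ)).det = 1 := by
    rw [← det_mul, (mem_unitaryGroup_iff).mp h.eigenvectorUnitary.2, det_one]
  have hdet : A.det.re = ∏ i, h.eigenvalues i := by
    rw [h.det_eq_prod_eigenvalues]
    norm_cast
  rw [mrpow, dif_pos h, det_mul, det_mul, mul_right_comm, hU, one_mul, det_diagonal,
    ← Complex.ofReal_prod, hdet, Real.finsetProd_rpow _ _ (fun i _ => hA.eigenvalues_nonneg i)]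

lemma Matrix.PosDef.re_det_pos {m : ℕ} {A : Matrix (Fin m) (Fin m) ℂ} (hA : A.PosDef) :
    0 < A.det.re :=
  (Complex.pos_iff.mp hA.det_pos).1

lemma Matrix.PosDef.det_eq_ofReal_re {m : ℕ} {A : Matrix (Fin m) (Fin m) ℂ} (hA : A.PosDef) :
    A.det = (A.det.re : ℂ) :=
  Complex.ext rfl (Complex.pos_iff.mp hA.det_pos).2.symm

lemma Real.rpow_half_mul_rpow_mul_rpow_half {x y : ℝ} (hx : 0 < x) (hy : 0 < y) (t : ℝ) :
    x ^ (1/2 : ℝ) * (x ^ (-(1/2) : ℝ) * y * x ^ (-(1/2) : ℝ)) ^ t * x ^ (1/2 : ℝ)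
      = x ^ (1 - t) * y ^ t := by
  have hx' : ∀ s : ℝ, 0 ≤ x ^ s := fun s => rpow_nonneg hx.le s
  rw [mul_rpow (by positivity) (hx' _), mul_rpow (hx' _) hy.le, ← rpow_mul hx.le]
  calc x ^ (1/2 : ℝ) * (x ^ (-(1/2) * t) * y ^ t * x ^ (-(1/2) * t)) * x ^ (1/2 : ℝ)
      = x ^ (1/2 : ℝ) * x ^ (-(1/2) * t) * (x ^ (-(1/2) * t) * x ^ (1/2 : ℝ)) * y ^ t := by ring
    _ = x ^ (1 - t) * y ^ t := by
      rw [← rpow_add hx, ← rpow_add hx, ← rpow_add hx]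
      ring_nf

lemma det_geomMean {m : ℕ} {A B : Matrix (Fin m) (Fin m) ℂ} (hA : A.PosDef) (hB : B.PosDef)
    (t : ℝ) :
    (geomMean t A B).det = ((A.det.re ^ (1 - t) * B.det.re ^ t : ℝ) : ℂ) := by
  have hX := mrpow_isHermitian hA.isHermitian (-(1/2))
  have hXBX : (mrpow A (-(1/2)) * B * mrpow A (-(1/2))).PosSemidef := by
    have := hB.posSemidef.conjTranspose_mul_mul_same (mrpow A (-(1/2)))
    rwa [hX.eq] at this
  have hdet : (mrpow A (-(1/2)) * B * mrpow A (-(1/2))).det.re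
      = A.det.re ^ (-(1/2) : ℝ) * B.det.re * A.det.re ^ (-(1/2) : ℝ) := by
    rw [det_mul, det_mul, det_mrpow hA.posSemidef, hB.det_eq_ofReal_re]
    norm_cast
  rw [geomMean, det_mul, det_mul, det_mrpow hA.posSemidef, det_mrpow hXBX, hdet,
    ← Complex.ofReal_mul, ← Complex.ofReal_mul,
    Real.rpow_half_mul_rpow_mul_rpow_half hA.re_det_pos hB.re_det_pos]

lemma Real.rpow_one_sub_mul_rpow_le {x y X Y t : ℝ} (hx : 0 ≤ x) (hy : 0 ≤ y)
    (hxX : x ≤ X) (hyY : y ≤ Y) (ht : t ∈ Set.Icc 0 1) :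
    x ^ (1 - t) * y ^ t ≤ X ^ (1 - t) * Y ^ t := by
  obtain ⟨ht0, ht1⟩ := ht
  have := hx.trans hxX
  gcongr

lemma Real.rpow_one_sub_mul_rpow_eq_iff {x y X Y t : ℝ} (hx : 0 < x) (hy : 0 < y)
    (hxX : x ≤ X) (hyY : y ≤ Y) (ht : t ∈ Set.Ioo 0 1) :
    x ^ (1 - t) * y ^ t = X ^ (1 - t) * Y ^ t ↔ x = X ∧ y = Y := by
  obtain ⟨ht0, ht1⟩ := ht
  rw [mul_eq_mul_iff_eq_and_eq_of_pos (by gcongr) (by gcongr) (rpow_pos_of_pos hx _)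
      (rpow_pos_of_pos (hy.trans_le hyY) _),
    rpow_left_inj hx.le (hx.le.trans hxX) (by linarith),
    rpow_left_inj hy.le (hy.le.trans hyY) ht0.ne']

theorem maxdet_geomMean_completion_general {n : ℕ}
    (E F : Fin n → Fin n → Prop)
    (A B : Matrix (Fin n) (Fin n) ℂ)
    (Ahat Bhat : Matrix (Fin n) (Fin n) ℂ)
    (hAhat : Ahat ∈ pdCompletions E A)
    (hAmax : ∀ M ∈ pdCompletions E A, M.det.re ≤ Ahat.det.re)
    (hAuniq : ∀ M ∈ pdCompletions E A, M.det.re = Ahat.det.re → M = Ahat)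
    (hBhat : Bhat ∈ pdCompletions F B)
    (hBmax : ∀ N ∈ pdCompletions F B, N.det.re ≤ Bhat.det.re)
    (hBuniq : ∀ N ∈ pdCompletions F B, N.det.re = Bhat.det.re → N = Bhat)
    (t : ℝ) (ht : t ∈ Set.Ioo (0:ℝ) 1) :
    ∀ M ∈ pdCompletions E A, ∀ N ∈ pdCompletions F B,
      (geomMean t M N).det.re ≤ (geomMean t Ahat Bhat).det.re ∧
      ((geomMean t M N).det.re = (geomMean t Ahat Bhat).det.re ↔ M = Ahat ∧ N = Bhat) := by
  intro M hM N hN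
  have hMA : M.det.re ≤ Ahat.det.re := hAmax M hM
  have hNB : N.det.re ≤ Bhat.det.re := hBmax N hN
  rw [det_geomMean hM.1 hN.1, det_geomMean hAhat.1 hBhat.1, Complex.ofReal_re, Complex.ofReal_re,
    Real.rpow_one_sub_mul_rpow_eq_iff hM.1.re_det_pos hN.1.re_det_pos hMA hNB ht]
  refine ⟨Real.rpow_one_sub_mul_rpow_le hM.1.re_det_pos.le hN.1.re_det_pos.le hMA hNB
    (Set.Ioo_subset_Icc_self ht), ?_, ?_⟩
  · rintro ⟨hM_eq, hN_eq⟩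
    exact ⟨hAuniq M hM hM_eq, hBuniq N hN hN_eq⟩
  · rintro ⟨rfl, rfl⟩
    exact ⟨rfl, rfl⟩

theorem maxdet_geomMean_completion {n : ℕ}
    (E F : Fin n → Fin n → Prop)
    (hErefl : ∀ i, E i i) (hEsymm : ∀ i j, E i j → E j i)
    (hFrefl : ∀ i, F i i) (hFsymm : ∀ i j, F i j → F j i)
    (A B : Matrix (Fin n) (Fin n) ℂ) (hA : PartialPD E A) (hB : PartialPD F B)
    (Ahat Bhat : Matrix (Fin n) (Fin n) ℂ)
    (hAhat : Ahat ∈ pdCompletions E A)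
    (hAmax : ∀ M ∈ pdCompletions E A, M.det.re ≤ Ahat.det.re)
    (hAuniq : ∀ M ∈ pdCompletions E A, M.det.re = Ahat.det.re → M = Ahat)
    (hBhat : Bhat ∈ pdCompletions F B)
    (hBmax : ∀ N ∈ pdCompletions F B, N.det.re ≤ Bhat.det.re)
    (hBuniq : ∀ N ∈ pdCompletions F B, N.det.re = Bhat.det.re → N = Bhat)
    (t : ℝ) (ht : t ∈ Set.Ioo (0:ℝ) 1) :
    ∀ M ∈ pdCompletions E A, ∀ N ∈ pdCompletions F B,
      (geomMean t M N).det.re ≤ (geomMean t Ahat Bhat).det.re ∧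
      ((geomMean t M N).det.re = (geomMean t Ahat Bhat).det.re ↔ M = Ahat ∧ N = Bhat) :=
  maxdet_geomMean_completion_general E F A B Ahat Bhat hAhat hAmax hAuniq hBhat hBmax hBuniq t ht
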